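/- arXiv:2101.11535 — 2 statements merged into one kernel-verified Lean document; each statement's English description precedes it below -/
import Mathlib

section
/- Let n = 2m with m odd, q = 2^m, a ∈ F_{2^n} with a + a^q ≠ 0, b a non-cube in F_{2^n}, and c ∈ F_{2^n} \ F_{2^m}. Then f(x) = a·Tr^n_m(b x^3) + a^q·Tr^n_m(c x^{2^m + 1}) is an APN function over F_{2^n}. -/
/-!
Let `σ x = x ^ q`, an involution of `F_{2^n}` with fixed field `F_q`, and `Tr y = y + σ y`.
If `x` and `y` both solve `f x + f (x + d) = β`, then for `z = x + y` in characteristic 2,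
`a · Tr (b (z² d + z d²)) + a^q · (c + c^q) (z^q d + z d^q) = 0`. Both cofactors lie in `F_q`, and
`a + a^q ≠ 0` makes `a, a^q` independent over `F_q`, so both vanish. The second gives
`z^q d = z d^q`; substituted into the first it yields `z (z + d) · Tr (b d³) = 0`. Finally
`b d³ ∉ F_q`: since `2^m ≡ 2 (mod 3)`, every nonzero element of `F_q` is a cube, and `b d³` is not.
Hence `z ∈ {0, d}`.
-/

open Function

lemma Set.ncard_setOf_eq_le_two {α γ : Type*} [Add α] {g : α → γ} {d : α}
    (hg : ∀ x y, g x = g y → y = x ∨ y = x + d) (β : γ) : {x | g x = β}.ncard ≤ 2 := by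
  rcases Set.eq_empty_or_nonempty {x | g x = β} with hS | ⟨x, hx⟩
  · simp [hS]
  have hsub : {x | g x = β} ⊆ {x, x + d} := fun y hy => hg x y (hx.trans hy.symm)
  calc {x | g x = β}.ncard ≤ ({x, x + d} : Set α).ncard := Set.ncard_le_ncard hsub
    _ ≤ 2 := (Set.ncard_insert_le _ _).trans (by simp)

lemma two_pow_mod_three_of_odd {m : ℕ} (hm : Odd m) : 2 ^ m % 3 = 2 := by
  obtain ⟨k, rfl⟩ := hm
  rw [pow_succ, pow_mul, Nat.mul_mod, Nat.pow_mod]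
  norm_num

lemma exists_pow_three_eq_of_pow_two_pow_eq_self {G₀ : Type*} [GroupWithZero G₀] {m : ℕ}
    (hm : Odd m) {s : G₀} (hs : s ≠ 0) (h : s ^ 2 ^ m = s) : ∃ r, r ^ 3 = s := by
  obtain ⟨t, ht⟩ : ∃ t, 2 ^ m = 3 * t + 2 :=
    ⟨2 ^ m / 3, by have := two_pow_mod_three_of_odd hm; omega⟩
  have hunit : s ^ (3 * t + 1) = 1 :=
    mul_right_cancel₀ hs (by rw [← pow_succ, one_mul, ← ht, h])
  refine ⟨s ^ (2 * t + 1), ?_⟩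
  rw [← pow_mul, show (2 * t + 1) * 3 = (3 * t + 1) * 2 + 1 by ring, pow_succ, pow_mul, hunit,
    one_pow, one_mul]

lemma GaloisField.iterateFrobenius_involutive {p m : ℕ} [Fact p.Prime] (hm : m ≠ 0) :
    Involutive (iterateFrobenius (GaloisField p (2 * m)) p m) := by
  intro x
  have := Fintype.ofFinite (GaloisField p (2 * m))
  rw [iterateFrobenius_def, iterateFrobenius_def, ← pow_mul, ← pow_add, ← two_mul,
    ← GaloisField.card p (2 * m) (by omega), Nat.card_eq_fintype_card, FiniteField.pow_card]

section Involution

variable {K : Type*} [Field K] [CharP K 2] (σ : K →+* K)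

-- the `f` of the theorem when `σ x = x ^ q`, using `x ^ (q + 1) = σ x * x`
def traceQuadratic (a b c x : K) : K :=
  a * (b * x ^ 3 + σ (b * x ^ 3)) + σ a * (c * (σ x * x) + σ (c * (σ x * x)))

variable {σ}

lemma eq_zero_and_eq_zero_of_mul_add_map_mul_eq_zero (hσ : Involutive σ) {a u v : K}
    (ha : a + σ a ≠ 0) (hu : σ u = u) (hv : σ v = v) (h : a * u + σ a * v = 0) :
    u = 0 ∧ v = 0 := by
  have h' : σ a * u + a * v = 0 := by
    simpa only [map_add, map_mul, map_zero, hu, hv, hσ a] using congrArg σ h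
  have huv : u = v := by
    have : (a + σ a) * (u + v) = 0 := by linear_combination h + h'
    exact CharTwo.add_eq_zero.mp ((mul_eq_zero.mp this).resolve_left ha)
  subst huv
  have : (a + σ a) * u = 0 := by linear_combination h
  have hu0 := (mul_eq_zero.mp this).resolve_left ha
  exact ⟨hu0, hu0⟩

lemma eq_zero_or_eq_of_trace_eq_zero {b d z : K} (hbd : σ (b * d ^ 3) ≠ b * d ^ 3)
    (htr : b * (z ^ 2 * d + z * d ^ 2) + σ (b * (z ^ 2 * d + z * d ^ 2)) = 0)
    (hz : σ z * d + z * σ d = 0) : z = 0 ∨ z = d := by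
  have hz' : σ z * d = z * σ d := CharTwo.add_eq_zero.mp hz
  have : (z * (z + d)) * (b * d ^ 3 + σ (b * d ^ 3)) = 0 := by
    simp only [map_add, map_mul, map_pow] at htr ⊢
    linear_combination (norm := (ring_nf; simp [CharTwo.two_eq_zero]))
      d ^ 2 * htr + (σ b * σ d * (d * σ z + z * σ d) + σ b * σ d ^ 2 * d) * hz'
  have hbd' : b * d ^ 3 + σ (b * d ^ 3) ≠ 0 := fun h => hbd (CharTwo.add_eq_zero.mp h).symm
  rcases mul_eq_zero.mp ((mul_eq_zero.mp this).resolve_right hbd') with h | h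
  · exact .inl h
  · exact .inr (CharTwo.add_eq_zero.mp h)

lemma traceQuadratic_deriv_add_deriv (hσ : Involutive σ) (a b c x y d : K) :
    traceQuadratic σ a b c x + traceQuadratic σ a b c (x + d) +
        (traceQuadratic σ a b c y + traceQuadratic σ a b c (y + d)) =
      a * (b * ((x + y) ^ 2 * d + (x + y) * d ^ 2) + σ (b * ((x + y) ^ 2 * d + (x + y) * d ^ 2)))
        + σ a * ((c + σ c) * (σ (x + y) * d + (x + y) * σ d)) := by
  simp only [traceQuadratic, map_add, map_mul, map_pow, hσ _]
  linear_combination (norm := (ring_nf; simp [CharTwo.two_eq_zero]))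

theorem eq_or_eq_add_of_traceQuadratic_add_eq (hσ : Involutive σ) {a b c d x y : K}
    (ha : a + σ a ≠ 0) (hbd : σ (b * d ^ 3) ≠ b * d ^ 3) (hc : σ c ≠ c)
    (h : traceQuadratic σ a b c x + traceQuadratic σ a b c (x + d) =
      traceQuadratic σ a b c y + traceQuadratic σ a b c (y + d)) :
    y = x ∨ y = x + d := by
  have hsum := traceQuadratic_deriv_add_deriv hσ a b c x y d
  rw [h, CharTwo.add_self_eq_zero] at hsum
  obtain ⟨htr, hv⟩ := eq_zero_and_eq_zero_of_mul_add_map_mul_eq_zero hσ ha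
    (by simp only [map_add, hσ _, add_comm]) (by simp only [map_add, map_mul, hσ _]; ring)
    hsum.symm
  have hc' : c + σ c ≠ 0 := fun h => hc (CharTwo.add_eq_zero.mp h).symm
  rcases eq_zero_or_eq_of_trace_eq_zero hbd htr ((mul_eq_zero.mp hv).resolve_left hc') with
    h | h
  · exact .inl (CharTwo.add_eq_zero.mp h).symm
  · exact .inr (by rw [← h, CharTwo.add_cancel_left])

end Involution

theorem stmt_11_general (m : ℕ) (hodd : Odd m)
    (a b c : GaloisField 2 (2 * m))
    (ha : a + a ^ (2 ^ m) ≠ 0)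
    (hb : ¬ ∃ β : GaloisField 2 (2 * m), β ^ 3 = b)
    (hc : c ^ (2 ^ m) ≠ c)
    (f : GaloisField 2 (2 * m) → GaloisField 2 (2 * m))
    (hf : ∀ x, f x = a * (b * x ^ 3 + (b * x ^ 3) ^ (2 ^ m)) +
        a ^ (2 ^ m) * (c * x ^ (2 ^ m + 1) + (c * x ^ (2 ^ m + 1)) ^ (2 ^ m))) :
    ∀ d : GaloisField 2 (2 * m), d ≠ 0 → ∀ β : GaloisField 2 (2 * m),
      {x : GaloisField 2 (2 * m) | f x + f (x + d) = β}.ncard ≤ 2 := by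
  intro d hd β
  set σ := iterateFrobenius (GaloisField 2 (2 * m)) 2 m
  have hσ : Involutive σ := GaloisField.iterateFrobenius_involutive hodd.pos.ne'
  have hbd : σ (b * d ^ 3) ≠ b * d ^ 3 := by
    intro h
    have hb0 : b ≠ 0 := by rintro rfl; exact hb ⟨0, by ring⟩
    obtain ⟨r, hr⟩ :=
      exists_pow_three_eq_of_pow_two_pow_eq_self hodd (mul_ne_zero hb0 (pow_ne_zero 3 hd)) h
    exact hb ⟨r / d, by rw [div_pow, hr]; field_simp⟩
  obtain rfl : f = traceQuadratic σ a b c := funext fun x => by rw [hf, pow_succ x (2 ^ m)]; rfl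
  exact Set.ncard_setOf_eq_le_two
    (fun x y h => eq_or_eq_add_of_traceQuadratic_add_eq hσ ha hbd hc h) β

theorem stmt_11 (m : ℕ) (hm : 0 < m) (hodd : Odd m)
    (a b c : GaloisField 2 (2 * m))
    (ha : a + a ^ (2 ^ m) ≠ 0)
    (hb : ¬ ∃ β : GaloisField 2 (2 * m), β ^ 3 = b)
    (hc : c ^ (2 ^ m) ≠ c)
    (f : GaloisField 2 (2 * m) → GaloisField 2 (2 * m))
    (hf : ∀ x, f x = a * (b * x ^ 3 + (b * x ^ 3) ^ (2 ^ m)) +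
        a ^ (2 ^ m) * (c * x ^ (2 ^ m + 1) + (c * x ^ (2 ^ m + 1)) ^ (2 ^ m))) :
    ∀ d : GaloisField 2 (2 * m), d ≠ 0 → ∀ β : GaloisField 2 (2 * m),
      {x : GaloisField 2 (2 * m) | f x + f (x + d) = β}.ncard ≤ 2 :=
  stmt_11_general m hodd a b c ha hb hc f hf
end

section
/- Let n = 2m with m odd, q = 2^m, a ∈ F_{2^n} with a + a^q ≠ 0, b a non-cube in F_{2^n}, c ∈ F_{2^n}^* with b·c ∈ F_{2^m}, and s = m + 2. Then f(x) = a·Tr^n_m(b x^3) + a^q·Tr^n_m(c x^{2^s + 1}) is an APN function over F_{2^n}. -/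
/-!
Both `x ↦ x³` and `x ↦ x ^ (2 ^ s + 1)` are quadratic, so for `x' = x + d y` the sum
`f x + f (x + d) + f x' + f (x' + d)` equals `a Tr(B (y² + y)) + a^q Tr(C (y^(4q) + y))` with
`B = b d³` and `C = c d^(4q+1)`. Both traces lie in `𝔽_q` and `a + a^q ≠ 0`, so both vanish.
Conjugating the two conditions and eliminating `y² + y` (using `B C ∈ 𝔽_q`) leaves, for
`u = Tr y ≠ 0`, the relation `B^(q+1) u (u+1)² = Tr(B)²`. Writing `u = s + s⁻¹`, this says
`B^(q-1) = s^(±3)`, and `s^q ∈ {s, s⁻¹}`; in both cases `B^(q-1) = t³` with `t^(q+1) = 1`.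
Since `3 ∣ q + 1` this gives `B^((q²-1)/3) = 1`, so `B`, and with it `b`, is a cube. Hence
`y ∈ {0, 1}`, i.e. `x' ∈ {x, x + d}`.
-/

open Finset

theorem Nat.three_dvd_two_pow_add_one {m : ℕ} (hm : Odd m) : 3 ∣ 2 ^ m + 1 := by
  simpa using hm.nat_add_dvd_pow_add_pow 2 1

theorem IsCyclic.exists_pow_eq_of_pow_card_div_eq_one {G : Type*} [CommGroup G] [IsCyclic G]
    [Finite G] {n : ℕ} (hn : n ∣ Nat.card G) {g : G} (hg : g ^ (Nat.card G / n) = 1) :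
    ∃ h, h ^ n = g := by
  have hle : (powMonoidHom n : G →* G).range ≤ (powMonoidHom (Nat.card G / n)).ker := by
    rintro _ ⟨h, rfl⟩
    simp [← pow_mul, Nat.mul_div_cancel' hn, pow_card_eq_one']
  have hcard : Nat.card (powMonoidHom (Nat.card G / n) : G →* G).ker ≤
      Nat.card (powMonoidHom n : G →* G).range := by
    rw [card_powMonoidHom_ker, card_powMonoidHom_range, Nat.gcd_eq_right (Nat.div_dvd_of_dvd hn),
      Nat.gcd_eq_right hn]
  exact (Subgroup.eq_of_le_of_card_ge hle hcard ▸ hg : g ∈ (powMonoidHom n : G →* G).range)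

theorem exists_cube_eq_of_pow_eq_mul_cube {K : Type*} [Field K] [Finite K] {q : ℕ}
    (hK : Nat.card K = q ^ 2) (h3 : 3 ∣ q + 1) {B t : K} (hB : B ≠ 0) (ht : t ^ (q + 1) = 1)
    (hBt : B ^ q = B * t ^ 3) : ∃ β, β ^ 3 = B := by
  obtain ⟨k, hk⟩ := h3
  have hq : 1 ≤ q := by omega
  have hunits : Nat.card Kˣ = 3 * ((q - 1) * k) := by
    rw [Nat.card_units, hK]
    have hk' : (q : ℤ) + 1 = 3 * k := by exact_mod_cast hk
    zify [hq, Nat.one_le_pow 2 q hq]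
    linear_combination (q - 1 : ℤ) * hk'
  have hBk : B ^ ((q - 1) * k) = 1 := by
    refine mul_right_cancel₀ (pow_ne_zero k hB) ?_
    rw [← pow_add, ← Nat.succ_mul, Nat.succ_eq_add_one, Nat.sub_add_cancel hq, pow_mul, hBt,
      mul_pow, ← pow_mul, ← hk, ht, mul_one, one_mul]
  obtain ⟨β, hβ⟩ := IsCyclic.exists_pow_eq_of_pow_card_div_eq_one (n := 3)
    (hunits ▸ dvd_mul_right _ _) (g := Units.mk0 B hB)
    (by rw [hunits, Nat.mul_div_cancel_left _ three_pos]; ext; simpa using hBk)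
  exact ⟨β, by simpa using congrArg Units.val hβ⟩

theorem pow_two_pow_pow_two_pow {K : Type*} [Field K] [Finite K] {m : ℕ}
    (hK : Nat.card K = 2 ^ (2 * m)) (x : K) : (x ^ 2 ^ m) ^ 2 ^ m = x := by
  have := Fintype.ofFinite K
  rw [← pow_mul, ← pow_add, ← two_mul, ← hK, Nat.card_eq_fintype_card]
  exact FiniteField.pow_card x

section CharTwoRing

variable {R : Type*} [CommRing R] [CharP R 2]

theorem pow_two_pow_add_one_second_difference (k : ℕ) (x y d : R) :
    x ^ (2 ^ k + 1) + (x + d) ^ (2 ^ k + 1) + ((x + y) ^ (2 ^ k + 1) + (x + y + d) ^ (2 ^ k + 1)) =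
      d ^ 2 ^ k * y + y ^ 2 ^ k * d := by
  simp only [pow_succ _ (2 ^ k), add_pow_char_pow]
  linear_combination (2 * x ^ 2 ^ k * x + x ^ 2 ^ k * (y + d) + (y ^ 2 ^ k + d ^ 2 ^ k) * x +
    d ^ 2 ^ k * d + y ^ 2 ^ k * y) * CharTwo.two_eq_zero (R := R)

theorem sum_pow_two_pow_sq_add_self (x : R) (m : ℕ) :
    (∑ i ∈ range m, x ^ 2 ^ i) ^ 2 + ∑ i ∈ range m, x ^ 2 ^ i = x ^ 2 ^ m + x := by
  induction m with
  | zero => simp [CharTwo.add_self_eq_zero]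
  | succ m ih =>
    rw [sum_range_succ, CharTwo.add_sq, ← pow_mul, ← pow_succ]
    linear_combination ih + x ^ 2 ^ m * CharTwo.two_eq_zero (R := R)

/-- Elimination of `w`: substitute `h1` into `(B + B') * h2`. -/
theorem mul_mul_sq_mul_add_one_sq_eq {B B' w u : R} (h1 : w * (B + B') = B' * (u ^ 2 + u))
    (h2 : (w ^ 2 + w) * (B + B') = B' * u ^ 4 + B * u) :
    B * B' * u ^ 2 * (u + 1) ^ 2 = u * (B + B') ^ 2 := by
  linear_combination (w * (B + B') + B' * (u ^ 2 + u) + B + B') * h1 - (B + B') * h2 +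
    (B * B' * (u ^ 3 + u ^ 2 - u) - B ^ 2 * u + B' ^ 2 * (u ^ 3 + u ^ 2)) *
      CharTwo.two_eq_zero (R := R)

/-- With `u = s + s⁻¹` we have `s³ + s⁻³ = u³ + u = u (u + 1)²`, and `h` says that
`B / B' + B' / B` is the same quantity. -/
theorem mul_cube_add_mul_mul_cube_add_eq_zero {B B' s u : R} (hs : s ^ 2 + u * s + 1 = 0)
    (h : B * B' * u * (u + 1) ^ 2 = (B + B') ^ 2) :
    (B * s ^ 3 + B') * (B' * s ^ 3 + B) = 0 := by
  linear_combination (-s ^ 3) * h +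
    B * B' * (s ^ 4 + u * s ^ 3 + (1 + u ^ 2) * s ^ 2 + u * s + 1) * hs -
    B * B' * (s * u + s ^ 2 + s ^ 2 * u ^ 2 + s ^ 3 + s ^ 3 * u - s ^ 3 * u ^ 2 + s ^ 4 +
      s ^ 4 * u ^ 2 + s ^ 5 * u) * CharTwo.two_eq_zero (R := R)

end CharTwoRing

section CharTwoField

variable {K : Type*} [Field K] [CharP K 2] {m : ℕ}

/-- `Tr^n_m`, with `q = 2 ^ m`. -/
def relTrace (m : ℕ) (x : K) : K := x + x ^ 2 ^ m

theorem relTrace_add (x y : K) : relTrace m (x + y) = relTrace m x + relTrace m y := by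
  simp only [relTrace, add_pow_char_pow]
  ring

theorem relTrace_pow_two_pow (hinv : ∀ x : K, (x ^ 2 ^ m) ^ 2 ^ m = x) (x : K) :
    relTrace m x ^ 2 ^ m = relTrace m x := by
  rw [relTrace, add_pow_char_pow, hinv, add_comm]

theorem relTrace_eq_zero_iff {x : K} : relTrace m x = 0 ↔ x ^ 2 ^ m = x :=
  CharTwo.add_eq_zero.trans eq_comm

theorem relTrace_eq_zero_of_mul_relTrace_add_pow_mul_relTrace_eq_zero
    (hinv : ∀ x : K, (x ^ 2 ^ m) ^ 2 ^ m = x) {a S T : K} (ha : relTrace m a ≠ 0)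
    (h : a * relTrace m S + a ^ 2 ^ m * relTrace m T = 0) :
    relTrace m S = 0 ∧ relTrace m T = 0 := by
  have hconj : a ^ 2 ^ m * relTrace m S + a * relTrace m T = 0 := by
    have := congrArg (· ^ 2 ^ m) h
    simp only [add_pow_char_pow, mul_pow, hinv, relTrace_pow_two_pow hinv] at this
    simpa using this
  have hST : relTrace m S = relTrace m T := by
    have : relTrace m a * (relTrace m S + relTrace m T) = 0 := by
      rw [relTrace]; linear_combination h + hconj
    exact CharTwo.add_eq_zero.1 ((mul_eq_zero.1 this).resolve_left ha)
  have hS : relTrace m S = 0 := by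
    rw [← hST] at h
    exact (mul_eq_zero.1 (by rw [relTrace]; linear_combination h)).resolve_left ha
  exact ⟨hS, hST ▸ hS⟩

theorem exists_sq_add_self_eq (hinv : ∀ x : K, (x ^ 2 ^ m) ^ 2 ^ m = x) {a r : K}
    (ha : relTrace m a ≠ 0) (hr : r ^ 2 ^ m = r) : ∃ v, v ^ 2 + v = r := by
  set v₀ := a * r / relTrace m a
  have hv₀ : v₀ ^ 2 ^ m + v₀ = r := by
    simp only [v₀, div_pow, mul_pow, relTrace_pow_two_pow hinv, hr]
    field_simp
    rw [relTrace]
    ring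
  exact ⟨_, (sum_pow_two_pow_sq_add_self v₀ m).trans hv₀⟩

theorem exists_sq_add_mul_add_one_eq_zero (hinv : ∀ x : K, (x ^ 2 ^ m) ^ 2 ^ m = x) {a u : K}
    (ha : relTrace m a ≠ 0) (hu : u ^ 2 ^ m = u) (hu0 : u ≠ 0) :
    ∃ s, s ^ 2 + u * s + 1 = 0 := by
  obtain ⟨v, hv⟩ := exists_sq_add_self_eq hinv ha (r := (u ^ 2)⁻¹)
    (by rw [inv_pow, pow_right_comm, hu])
  refine ⟨u * v, ?_⟩
  linear_combination u ^ 2 * hv + mul_inv_cancel₀ (pow_ne_zero 2 hu0) +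
    CharTwo.two_eq_zero (R := K)

/-- `s ^ 2 ^ m` is again a root of `X² + u X + 1`, whose roots are `s` and `s⁻¹`. -/
theorem pow_two_pow_eq_self_or_pow_two_pow_mul_eq_one {s u : K} (hu : u ^ 2 ^ m = u)
    (hs : s ^ 2 + u * s + 1 = 0) : s ^ 2 ^ m = s ∨ s ^ 2 ^ m * s = 1 := by
  have hs' := congrArg (· ^ 2 ^ m) hs
  simp only [add_pow_char_pow, mul_pow, hu, one_pow, zero_pow (pow_ne_zero m two_ne_zero),
    pow_right_comm s 2] at hs'
  have : (s ^ 2 ^ m + s) * (s ^ 2 ^ m + s + u) = 0 := by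
    linear_combination hs' + hs + (s ^ 2 ^ m * s - 1) * CharTwo.two_eq_zero (R := K)
  rcases mul_eq_zero.1 this with h | h
  · exact Or.inl (CharTwo.add_eq_zero.1 h)
  · exact Or.inr (by linear_combination s * h - hs)

theorem exists_pow_eq_mul_cube (hinv : ∀ x : K, (x ^ 2 ^ m) ^ 2 ^ m = x) {a u B : K}
    (ha : relTrace m a ≠ 0) (hu : u ^ 2 ^ m = u) (hu0 : u ≠ 0)
    (h : B * B ^ 2 ^ m * u * (u + 1) ^ 2 = (B + B ^ 2 ^ m) ^ 2) :
    ∃ t : K, t ^ (2 ^ m + 1) = 1 ∧ B ^ 2 ^ m = B * t ^ 3 := by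
  obtain ⟨s, hs⟩ := exists_sq_add_mul_add_one_eq_zero hinv ha hu hu0
  have hcubes : B ^ 2 ^ m = B * s ^ 3 ∨ B = B ^ 2 ^ m * s ^ 3 := by
    rcases mul_eq_zero.1 (mul_cube_add_mul_mul_cube_add_eq_zero hs h) with h' | h'
    · exact Or.inl (CharTwo.add_eq_zero.1 h').symm
    · exact Or.inr (CharTwo.add_eq_zero.1 h').symm
  rcases pow_two_pow_eq_self_or_pow_two_pow_mul_eq_one hu hs with hfix | hnorm
  · refine ⟨1, one_pow _, ?_⟩
    have conj : ∀ {X Y : K}, X = Y * s ^ 3 → X ^ 2 ^ m = Y ^ 2 ^ m * s ^ 3 := fun h' => by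
      rw [h', mul_pow, pow_right_comm, hfix]
    have hboth : B ^ 2 ^ m = B * s ^ 3 ∧ B = B ^ 2 ^ m * s ^ 3 := by
      rcases hcubes with h' | h'
      · exact ⟨h', by simpa [hinv] using conj h'⟩
      · exact ⟨by simpa [hinv] using conj h', h'⟩
    have : (B + B ^ 2 ^ m) * (s ^ 3 + 1) = 0 := by
      linear_combination hboth.1 + hboth.2 +
        (B + B ^ 2 ^ m) * s ^ 3 * CharTwo.two_eq_zero (R := K)
    rcases mul_eq_zero.1 this with h' | h'
    · rw [one_pow, mul_one, (CharTwo.add_eq_zero.1 h').symm]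
    · rw [one_pow, ← CharTwo.add_eq_zero.1 h', hboth.1]
  · rcases hcubes with h' | h'
    · exact ⟨s, by rwa [pow_succ], h'⟩
    · refine ⟨s ^ 2 ^ m, by rw [pow_succ, hinv, mul_comm, hnorm], ?_⟩
      linear_combination (-(s ^ 2 ^ m) ^ 3) * h' -
        B ^ 2 ^ m * ((s ^ 2 ^ m * s) ^ 2 + s ^ 2 ^ m * s + 1) * hnorm

theorem exists_pow_eq_mul_cube_of_conj_eqs (hinv : ∀ x : K, (x ^ 2 ^ m) ^ 2 ^ m = x)
    {a B y : K} (ha : relTrace m a ≠ 0) (hy : y ^ 2 ≠ y)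
    (h1 : B ^ 2 ^ m * ((y ^ 2 ^ m) ^ 2 + y ^ 2 ^ m) = B * (y ^ 2 + y))
    (h2 : B * (y ^ 4 + y ^ 2 ^ m) = B ^ 2 ^ m * ((y ^ 2 ^ m) ^ 4 + y)) :
    ∃ t : K, t ^ (2 ^ m + 1) = 1 ∧ B ^ 2 ^ m = B * t ^ 3 := by
  have two := CharTwo.two_eq_zero (R := K)
  have hY : y ^ 2 ^ m = y + relTrace m y := by
    rw [relTrace, ← add_assoc, CharTwo.add_self_eq_zero, zero_add]
  set u := relTrace m y
  have hY4 : (y + u) ^ 4 = y ^ 4 + u ^ 4 := by simpa using add_pow_char_pow y u 2 2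
  rw [hY, CharTwo.add_sq] at h1
  rw [hY, hY4] at h2
  have eq1 : (y ^ 2 + y) * (B + B ^ 2 ^ m) = B ^ 2 ^ m * (u ^ 2 + u) := by
    linear_combination -h1 + B ^ 2 ^ m * (y ^ 2 + y) * two
  have eq2 : ((y ^ 2 + y) ^ 2 + (y ^ 2 + y)) * (B + B ^ 2 ^ m) = B ^ 2 ^ m * u ^ 4 + B * u := by
    linear_combination -h2 +
      (B * (y + y ^ 2 + y ^ 3 + y ^ 4) + B ^ 2 ^ m * (y ^ 2 + y ^ 3 - u ^ 4)) * two
  by_cases hu0 : u = 0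
  · refine ⟨1, one_pow _, ?_⟩
    rw [hu0] at eq1
    have hw : y ^ 2 + y ≠ 0 := fun h => hy (CharTwo.add_eq_zero.1 h)
    have := (mul_eq_zero.1 (by simpa using eq1)).resolve_left hw
    rw [one_pow, mul_one, (CharTwo.add_eq_zero.1 this).symm]
  · refine exists_pow_eq_mul_cube hinv ha (relTrace_pow_two_pow hinv y) hu0
      (mul_left_cancel₀ hu0 ?_)
    linear_combination mul_mul_sq_mul_add_one_sq_eq eq1 eq2

def traceBinomial (m : ℕ) (a b c x : K) : K :=
  a * relTrace m (b * x ^ 3) + a ^ 2 ^ m * relTrace m (c * x ^ (2 ^ (m + 2) + 1))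

theorem traceBinomial_second_difference (a b c d x y : K) :
    traceBinomial m a b c x + traceBinomial m a b c (x + d) +
        (traceBinomial m a b c (x + d * y) + traceBinomial m a b c (x + d * y + d)) =
      a * relTrace m (b * d ^ 3 * (y ^ 2 + y)) +
        a ^ 2 ^ m * relTrace m (c * d ^ (2 ^ (m + 2) + 1) * (y ^ 2 ^ (m + 2) + y)) := by
  have h3 : b * d ^ 3 * (y ^ 2 + y) =
      b * x ^ 3 + b * (x + d) ^ 3 + (b * (x + d * y) ^ 3 + b * (x + d * y + d) ^ 3) := by
    have := pow_two_pow_add_one_second_difference 1 x (d * y) d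
    norm_num at this
    linear_combination -b * this
  have h5 : c * d ^ (2 ^ (m + 2) + 1) * (y ^ 2 ^ (m + 2) + y) =
      c * x ^ (2 ^ (m + 2) + 1) + c * (x + d) ^ (2 ^ (m + 2) + 1) +
        (c * (x + d * y) ^ (2 ^ (m + 2) + 1) + c * (x + d * y + d) ^ (2 ^ (m + 2) + 1)) := by
    linear_combination -c * pow_two_pow_add_one_second_difference (m + 2) x (d * y) d
  rw [h3, h5]
  simp only [traceBinomial, relTrace_add]
  ring

end CharTwoField

section FiniteField

variable {K : Type*} [Field K] [Finite K] [CharP K 2] {m : ℕ}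

theorem sq_eq_self_of_pow_eq_self (hK : Nat.card K = 2 ^ (2 * m)) (hm : Odd m) {a B C y : K}
    (ha : relTrace m a ≠ 0) (hB : ¬∃ β, β ^ 3 = B) (hC : C ≠ 0)
    (hBC : (B * C) ^ 2 ^ m = B * C)
    (h1 : (B * (y ^ 2 + y)) ^ 2 ^ m = B * (y ^ 2 + y))
    (h2 : (C * (y ^ 2 ^ (m + 2) + y)) ^ 2 ^ m = C * (y ^ 2 ^ (m + 2) + y)) : y ^ 2 = y := by
  have hinv := pow_two_pow_pow_two_pow hK
  have hy1 : B ^ 2 ^ m * ((y ^ 2 ^ m) ^ 2 + y ^ 2 ^ m) = B * (y ^ 2 + y) := by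
    simpa [mul_pow, add_pow_char_pow, pow_right_comm y 2] using h1
  have hy2 : B * (y ^ 4 + y ^ 2 ^ m) = B ^ 2 ^ m * ((y ^ 2 ^ m) ^ 4 + y) := by
    have hy4 : y ^ 2 ^ (m + 2) = (y ^ 2 ^ m) ^ 4 := by rw [pow_add, pow_mul]; norm_num
    rw [hy4] at h2
    have h2' : C ^ 2 ^ m * (y ^ 4 + y ^ 2 ^ m) = C * ((y ^ 2 ^ m) ^ 4 + y) := by
      simpa [mul_pow, add_pow_char_pow, pow_right_comm _ 4, hinv] using h2
    rw [mul_pow] at hBC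
    refine mul_right_cancel₀ hC ?_
    linear_combination B ^ 2 ^ m * h2' - (y ^ 4 + y ^ 2 ^ m) * hBC
  by_contra hy
  obtain ⟨t, ht, hBt⟩ := exists_pow_eq_mul_cube_of_conj_eqs hinv ha hy hy1 hy2
  have hB0 : B ≠ 0 := fun h0 => hB ⟨0, by simp [h0]⟩
  exact hB (exists_cube_eq_of_pow_eq_mul_cube (by rw [hK, pow_mul'])
    (Nat.three_dvd_two_pow_add_one hm) hB0 ht hBt)

theorem sq_eq_self_of_traceBinomial_add_eq (hK : Nat.card K = 2 ^ (2 * m)) (hm : Odd m)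
    {a b c d x y : K} (ha : relTrace m a ≠ 0) (hb : ¬∃ β, β ^ 3 = b) (hc : c ≠ 0)
    (hbc : (b * c) ^ 2 ^ m = b * c) (hd : d ≠ 0)
    (h : traceBinomial m a b c x + traceBinomial m a b c (x + d) =
      traceBinomial m a b c (x + d * y) + traceBinomial m a b c (x + d * y + d)) :
    y ^ 2 = y := by
  have hinv := pow_two_pow_pow_two_pow hK
  have hsum := traceBinomial_second_difference (m := m) a b c d x y
  rw [h, CharTwo.add_self_eq_zero] at hsum
  obtain ⟨h1, h2⟩ :=
    relTrace_eq_zero_of_mul_relTrace_add_pow_mul_relTrace_eq_zero hinv ha hsum.symm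
  refine sq_eq_self_of_pow_eq_self hK hm ha ?_ (mul_ne_zero hc (pow_ne_zero _ hd)) ?_
    (relTrace_eq_zero_iff.1 h1) (relTrace_eq_zero_iff.1 h2)
  · rintro ⟨γ, hγ⟩
    exact hb ⟨γ / d, by rw [div_pow, hγ, mul_div_cancel_right₀ _ (pow_ne_zero 3 hd)]⟩
  · have hnorm : (d * d ^ 2 ^ m) ^ 2 ^ m = d * d ^ 2 ^ m := by
      rw [mul_pow, hinv, mul_comm (d ^ 2 ^ m)]
    rw [show b * d ^ 3 * (c * d ^ (2 ^ (m + 2) + 1)) = b * c * (d * d ^ 2 ^ m) ^ 4 by ring,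
      mul_pow, hbc, pow_right_comm, hnorm]

end FiniteField

theorem stmt_13_general (m : ℕ) (hodd : Odd m)
    (a b c : GaloisField 2 (2 * m))
    (ha : a + a ^ (2 ^ m) ≠ 0)
    (hb : ¬ ∃ β : GaloisField 2 (2 * m), β ^ 3 = b)
    (hc : c ≠ 0)
    (hbc : (b * c) ^ (2 ^ m) = b * c)
    (f : GaloisField 2 (2 * m) → GaloisField 2 (2 * m))
    (hf : ∀ x, f x = a * (b * x ^ 3 + (b * x ^ 3) ^ (2 ^ m)) +
        a ^ (2 ^ m) * (c * x ^ (2 ^ (m + 2) + 1) + (c * x ^ (2 ^ (m + 2) + 1)) ^ (2 ^ m))) :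
    ∀ d : GaloisField 2 (2 * m), d ≠ 0 → ∀ β : GaloisField 2 (2 * m),
      {x : GaloisField 2 (2 * m) | f x + f (x + d) = β}.ncard ≤ 2 := by
  intro d hd β
  have hK : Nat.card (GaloisField 2 (2 * m)) = 2 ^ (2 * m) :=
    GaloisField.card 2 _ (mul_ne_zero two_ne_zero hodd.pos.ne')
  obtain rfl : f = traceBinomial m a b c := funext hf
  set S := {x | traceBinomial m a b c x + traceBinomial m a b c (x + d) = β}
  rcases S.eq_empty_or_nonempty with hS | ⟨x, hx⟩
  · simp [hS]
  calc _ ≤ ({x, x + d} : Set (GaloisField 2 (2 * m))).ncard := by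
        refine Set.ncard_le_ncard (fun x' hx' => ?_) (Set.toFinite _)
        obtain ⟨y, rfl⟩ : ∃ y, x' = x + d * y := ⟨(x' - x) / d, by field_simp; ring⟩
        have hy := sq_eq_self_of_traceBinomial_add_eq hK hodd ha hb hc hbc hd (hx.trans hx'.symm)
        rcases mul_eq_zero.1 (show y * (y - 1) = 0 by linear_combination hy) with h | h
        · simp [h]
        · simp [sub_eq_zero.1 h]
    _ ≤ 2 := (Set.ncard_insert_le _ _).trans (by simp)

theorem stmt_13 (m : ℕ) (hm : 0 < m) (hodd : Odd m)
    (a b c : GaloisField 2 (2 * m))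
    (ha : a + a ^ (2 ^ m) ≠ 0)
    (hb : ¬ ∃ β : GaloisField 2 (2 * m), β ^ 3 = b)
    (hc : c ≠ 0)
    (hbc : (b * c) ^ (2 ^ m) = b * c)
    (f : GaloisField 2 (2 * m) → GaloisField 2 (2 * m))
    (hf : ∀ x, f x = a * (b * x ^ 3 + (b * x ^ 3) ^ (2 ^ m)) +
        a ^ (2 ^ m) * (c * x ^ (2 ^ (m + 2) + 1) + (c * x ^ (2 ^ (m + 2) + 1)) ^ (2 ^ m))) :
    ∀ d : GaloisField 2 (2 * m), d ≠ 0 → ∀ β : GaloisField 2 (2 * m),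
      {x : GaloisField 2 (2 * m) | f x + f (x + d) = β}.ncard ≤ 2 :=
  stmt_13_general m hodd a b c ha hb hc hbc f hf
end
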